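/- Let L ≥ 3, N ≥ 2, σ_w, σ_b > 0 with 0 < σ_w² < 2, and set r* = √(N σ_b²/(2 − σ_w²)). Define the ring energy ℒ on ((0,∞) × (0,∞) × (0,N))^L by ℒ({r₊_l, r₋_l, k_l}) = (1/2) Σ_{l=0}^{L-1} [ (r₊_l² + r₋_l²)/(σ_w² r₊_{l-1}²/N + σ_b²) + N log(σ_w² r₊_l²/N + σ_b²) + (N − k_l)(3 log(N − k_l) − 2 log r₊_l) + k_l (3 log k_l − 2 log r₋_l) ], indices modulo L. Then the uniform configuration r₊_l = r₋_l = r*, k_l = N/2 for all l is a strict local minimum of ℒ. -/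

import Mathlib

/-!
Moving the term `N log(σ_w² r₊_l²/N + σ_b²)` one layer forward splits the ring energy into layer
terms coupled only through `r₊_{l-1}`. Writing `ρ = (r₊_l² + r₋_l²)/(σ_w² r₊_{l-1}² + N σ_b²)`,
`w = log (r₋_l / r₊_l)` and `κ = k_l - N/2`, a layer term exceeds its uniform value by
`N (ρ - 1 - log ρ) + N log cosh w - 2 κ w + 3 (entropy gap of k_l)`. Near the uniform point
`log cosh w ≥ 2w²/5` and the entropy gap is at least `3κ²/(2N)`, which dominates the cross term `2κw`
and leaves the nonnegative deficit `N (ρ - 1 - log ρ) + (N w² + κ²/N)/8`. If all deficits vanish then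
`r₋ = r₊`, `k = N/2` and `2 (r₊_l² - r*²) = σ_w² (r₊_{l-1}² - r*²)` around the ring; summing absolute
values over the ring and using `σ_w² < 2` forces `r₊ = r*` everywhere.
-/

open Real Filter Topology

theorem two_fifths_mul_sq_le_log_cosh {w : ℝ} (hw : w ^ 2 ≤ 1 / 4) :
    2 / 5 * w ^ 2 ≤ log (cosh w) := by
  have hsinh : w ^ 2 ≤ sinh w ^ 2 := by
    rw [← sq_abs w, ← sq_abs (sinh w), abs_sinh]
    exact pow_le_pow_left₀ (abs_nonneg w) (self_le_sinh_iff.2 (abs_nonneg w)) 2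
  have hpos : 0 < 1 + w ^ 2 := by positivity
  have hlog : 1 - (1 + w ^ 2)⁻¹ ≤ 2 * log (cosh w) := calc
    1 - (1 + w ^ 2)⁻¹ ≤ log (1 + w ^ 2) := one_sub_inv_le_log_of_pos hpos
    _ ≤ log (cosh w ^ 2) := log_le_log hpos (by rw [cosh_sq']; linarith)
    _ = 2 * log (cosh w) := by rw [log_pow]; norm_num
  have : 4 / 5 * w ^ 2 ≤ 1 - (1 + w ^ 2)⁻¹ := by
    rw [inv_eq_one_div, le_sub_iff_add_le, ← le_sub_iff_add_le', div_le_iff₀ hpos]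
    nlinarith
  linarith

theorem entropy_gap_ge_of_nonneg {c κ : ℝ} (hc : 0 < c) (hκ0 : 0 ≤ κ) (hκ : κ ≤ c / 8) :
    3 / 4 * (κ ^ 2 / c) ≤ (c + κ) * log (c + κ) + (c - κ) * log (c - κ) - 2 * c * log c := by
  have hu : 0 < c + κ := by linarith
  have hv : 0 < c - κ := by linarith
  have hsum : 1 - c ^ 2 / ((c + κ) * (c - κ)) ≤ log (c + κ) + log (c - κ) - 2 * log c := by
    have := one_sub_inv_le_log_of_pos (div_pos (mul_pos hu hv) (pow_pos hc 2))
    rwa [inv_div, log_div (by positivity) (by positivity), log_mul hu.ne' hv.ne', log_pow,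
      Nat.cast_ofNat] at this
  have hdiff : 1 - (c - κ) / (c + κ) ≤ log (c + κ) - log (c - κ) := by
    have := one_sub_inv_le_log_of_pos (div_pos hu hv)
    rwa [inv_div, log_div hu.ne' hv.ne'] at this
  have hsplit : (c + κ) * log (c + κ) + (c - κ) * log (c - κ) - 2 * c * log c
      = c * (log (c + κ) + log (c - κ) - 2 * log c) + κ * (log (c + κ) - log (c - κ)) := by ring
  have hrat : 3 / 4 * (κ ^ 2 / c) ≤
      c * (1 - c ^ 2 / ((c + κ) * (c - κ))) + κ * (1 - (c - κ) / (c + κ)) := by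
    have hrhs : c * (1 - c ^ 2 / ((c + κ) * (c - κ))) + κ * (1 - (c - κ) / (c + κ))
        = κ ^ 2 * (c - 2 * κ) / ((c + κ) * (c - κ)) := by
      field_simp
      ring
    rw [hrhs, mul_div_assoc', div_le_div_iff₀ hc (mul_pos hu hv)]
    nlinarith [sq_nonneg κ, mul_nonneg (sq_nonneg κ) (by linarith : 0 ≤ c - 8 * κ)]
  rw [hsplit]
  nlinarith [mul_le_mul_of_nonneg_left hsum hc.le, mul_le_mul_of_nonneg_left hdiff hκ0]

theorem entropy_gap_ge {c κ : ℝ} (hc : 0 < c) (hκ : |κ| ≤ c / 8) :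
    3 / 4 * (κ ^ 2 / c) ≤ (c + κ) * log (c + κ) + (c - κ) * log (c - κ) - 2 * c * log c := by
  rcases le_total 0 κ with hκ0 | hκ0
  · exact entropy_gap_ge_of_nonneg hc hκ0 (le_of_abs_le hκ)
  · have := entropy_gap_ge_of_nonneg hc (neg_nonneg.2 hκ0) (by linarith [neg_abs_le κ])
    rw [neg_sq, ← sub_eq_add_neg, sub_neg_eq_add] at this
    linarith

theorem eq_zero_of_abs_le_mul_abs_comp {ι : Type*} [Fintype ι] (σ : Equiv.Perm ι) {c : ℝ}
    (hc : c < 1) {d : ι → ℝ} (h : ∀ i, |d i| ≤ c * |d (σ i)|) : d = 0 := by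
  have hsum : ∑ i, |d i| ≤ c * ∑ i, |d i| := calc
    ∑ i, |d i| ≤ ∑ i, c * |d (σ i)| := Finset.sum_le_sum fun i _ => h i
    _ = c * ∑ i, |d i| := by rw [← Finset.mul_sum, Equiv.sum_comp σ fun i => |d i|]
  have hzero : ∑ i, |d i| = 0 :=
    le_antisymm (by nlinarith [Finset.sum_nonneg fun i (_ : i ∈ Finset.univ) => abs_nonneg (d i)])
      (Finset.sum_nonneg fun i _ => abs_nonneg (d i))
  ext i
  exact abs_eq_zero.1 <| (Finset.sum_eq_zero_iff_of_nonneg fun i _ => abs_nonneg (d i)).1 hzero i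
    (Finset.mem_univ i)

/-- `xp, x, y, k` stand for `r₊_{l-1}, r₊_l, r₋_l, k_l`. Twice the ring energy is the sum of these
terms once its `log` term has been shifted to the next layer. -/
noncomputable def layerEnergy (n a b xp x y k : ℝ) : ℝ :=
  (x ^ 2 + y ^ 2) / (a * xp ^ 2 / n + b) + n * log (a * xp ^ 2 / n + b) +
    (n - k) * (3 * log (n - k) - 2 * log x) + k * (3 * log k - 2 * log y)

theorem layerEnergy_eq {n a b xp x y k : ℝ} (hn : 0 < n) (ha : 0 ≤ a) (hb : 0 < b)
    (hx : 0 < x) (hy : 0 < y) :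
    layerEnergy n a b xp x y k =
      n * ((x ^ 2 + y ^ 2) / (a * xp ^ 2 + n * b) - log ((x ^ 2 + y ^ 2) / (a * xp ^ 2 + n * b))
        + log (cosh (log y - log x)) + log 2 - log n)
      - 2 * (k - n / 2) * (log y - log x) + 3 * ((n - k) * log (n - k) + k * log k) := by
  have ht : 0 < a * xp ^ 2 + n * b := by positivity
  have hA : x ^ 2 + y ^ 2 = 2 * x * y * cosh (log y - log x) := by
    rw [cosh_eq, exp_sub, exp_log hx, exp_log hy, neg_sub, exp_sub, exp_log hx, exp_log hy]
    field_simp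
    ring
  have hlogA : log (x ^ 2 + y ^ 2) = log 2 + log x + log y + log (cosh (log y - log x)) := by
    rw [hA, log_mul (by positivity) (cosh_pos _).ne', log_mul (by positivity) hy.ne',
      log_mul two_ne_zero hx.ne']
  have hden : a * xp ^ 2 / n + b = (a * xp ^ 2 + n * b) / n := by field_simp
  rw [layerEnergy, hden, log_div ht.ne' hn.ne', log_div (by positivity) ht.ne', hlogA,
    div_div_eq_mul_div]
  ring

theorem layerEnergy_star {n a b r : ℝ} (hn : 0 < n) (ha : 0 ≤ a) (hb : 0 < b) (hr : 0 < r)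
    (hr2 : r ^ 2 * (2 - a) = n * b) :
    layerEnergy n a b r r r (n / 2) = n * (1 + log 2 - log n) + 3 * n * log (n / 2) := by
  have hρ : (r ^ 2 + r ^ 2) / (a * r ^ 2 + n * b) = 1 := by
    rw [div_eq_one_iff_eq (by positivity)]
    linear_combination hr2
  rw [layerEnergy_eq hn ha hb hr hr, hρ, sub_self, cosh_zero, log_one, sub_half]
  ring

noncomputable def layerDeficit (n ρ w κ : ℝ) : ℝ :=
  n * (ρ - 1 - log ρ) + (n * w ^ 2 + κ ^ 2 / n) / 8

theorem layerDeficit_nonneg {n ρ : ℝ} (w κ : ℝ) (hn : 0 < n) (hρ : 0 < ρ) :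
    0 ≤ layerDeficit n ρ w κ := by
  have : 0 ≤ ρ - 1 - log ρ := by linarith [log_le_sub_one_of_pos hρ]
  unfold layerDeficit
  positivity

theorem eq_of_layerDeficit_eq_zero {n ρ w κ : ℝ} (hn : 0 < n) (hρ : 0 < ρ)
    (h : layerDeficit n ρ w κ = 0) : ρ = 1 ∧ w = 0 ∧ κ = 0 := by
  have hlog : 0 ≤ n * (ρ - 1 - log ρ) := mul_nonneg hn.le (by linarith [log_le_sub_one_of_pos hρ])
  have hw : 0 ≤ n * w ^ 2 := by positivity
  have hκ : 0 ≤ κ ^ 2 / n := by positivity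
  unfold layerDeficit at h
  have hw0 : n * w ^ 2 = 0 := by linarith
  have hκ0 : κ ^ 2 / n = 0 := by linarith
  refine ⟨?_, by simpa [hn.ne'] using hw0, by simpa [hn.ne'] using hκ0⟩
  by_contra hρ1
  nlinarith [log_lt_sub_one_of_pos hρ hρ1]

theorem layerDeficit_le_layerEnergy_sub {n a b r xp x y k : ℝ} (hn : 0 < n) (ha : 0 ≤ a)
    (hb : 0 < b) (hr : 0 < r) (hr2 : r ^ 2 * (2 - a) = n * b) (hx : 0 < x) (hy : 0 < y)
    (hw : (log y - log x) ^ 2 ≤ 1 / 4) (hk : |k - n / 2| ≤ n / 16) :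
    layerDeficit n ((x ^ 2 + y ^ 2) / (a * xp ^ 2 + n * b)) (log y - log x) (k - n / 2) ≤
      layerEnergy n a b xp x y k - layerEnergy n a b r r r (n / 2) := by
  rw [layerEnergy_eq hn ha hb hx hy, layerEnergy_star hn ha hb hr hr2, layerDeficit]
  set w := log y - log x
  set κ := k - n / 2
  have hcosh : n * (2 / 5 * w ^ 2) ≤ n * log (cosh w) :=
    mul_le_mul_of_nonneg_left (two_fifths_mul_sq_le_log_cosh hw) hn.le
  have hgap := entropy_gap_ge (half_pos hn) (hk.trans_eq (by ring) : |κ| ≤ n / 2 / 8)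
  rw [show n / 2 + κ = k by ring, show n / 2 - κ = n - k by ring,
    show κ ^ 2 / (n / 2) = 2 * (κ ^ 2 / n) by field_simp] at hgap
  have hcross : n * w ^ 2 / 4 - 2 * κ * w + 4 * (κ ^ 2 / n) = (n * w / 2 - 2 * κ) ^ 2 / n := by
    field_simp
    ring
  have hsq : 0 ≤ (n * w / 2 - 2 * κ) ^ 2 / n := by positivity
  have hκsq : 0 ≤ κ ^ 2 / n := by positivity
  nlinarith [sq_nonneg w]

theorem eventually_layer_bounds {ι : Type*} [Finite ι] {n r : ℝ} (hn : 0 < n) (hr : 0 < r) :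
    ∀ᶠ p : (ι → ℝ) × (ι → ℝ) × (ι → ℝ) in 𝓝 (fun _ => r, fun _ => r, fun _ => n / 2),
      ∀ l, 0 < p.1 l ∧ 0 < p.2.1 l ∧ (log (p.2.1 l) - log (p.1 l)) ^ 2 < 1 / 4 ∧
        |p.2.2 l - n / 2| < n / 16 := by
  refine eventually_all.2 fun l => ?_
  refine (ContinuousAt.eventually_lt ?_ ?_ ?_).and <| (ContinuousAt.eventually_lt ?_ ?_ ?_).and <|
    (ContinuousAt.eventually_lt ?_ ?_ ?_).and (ContinuousAt.eventually_lt ?_ ?_ ?_)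
  all_goals first | fun_prop (disch := exact hr.ne') | simp [hr, hn]

section Ring

variable {ι : Type*} [Fintype ι] (prev : Equiv.Perm ι)

theorem sum_ringEnergy_summand_eq_sum_layerEnergy (n a b : ℝ) (X Y K : ι → ℝ) :
    ∑ l, ((X l ^ 2 + Y l ^ 2) / (a * X (prev l) ^ 2 / n + b) + n * log (a * X l ^ 2 / n + b) +
      (n - K l) * (3 * log (n - K l) - 2 * log (X l)) + K l * (3 * log (K l) - 2 * log (Y l))) =
    ∑ l, layerEnergy n a b (X (prev l)) (X l) (Y l) (K l) := by
  have hshift : ∑ l, n * log (a * X l ^ 2 / n + b) = ∑ l, n * log (a * X (prev l) ^ 2 / n + b) :=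
    (Equiv.sum_comp prev fun l => n * log (a * X l ^ 2 / n + b)).symm
  simp only [layerEnergy, Finset.sum_add_distrib, hshift]

theorem eq_uniform_of_layerDeficit_eq_zero {n a b r : ℝ} (hn : 0 < n) (ha : 0 ≤ a) (ha2 : a < 2)
    (hb : 0 < b) (hr : 0 < r) (hr2 : r ^ 2 * (2 - a) = n * b) {X Y K : ι → ℝ}
    (hX : ∀ l, 0 < X l) (hY : ∀ l, 0 < Y l)
    (hD : ∀ l, layerDeficit n ((X l ^ 2 + Y l ^ 2) / (a * X (prev l) ^ 2 + n * b))
      (log (Y l) - log (X l)) (K l - n / 2) = 0) :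
    X = (fun _ => r) ∧ Y = (fun _ => r) ∧ K = fun _ => n / 2 := by
  have hden : ∀ l, 0 < a * X (prev l) ^ 2 + n * b := fun l => by positivity
  have hzero l := eq_of_layerDeficit_eq_zero hn (div_pos (by nlinarith [hX l]) (hden l)) (hD l)
  have hYX : ∀ l, Y l = X l := fun l =>
    log_injOn_pos (hY l) (hX l) (sub_eq_zero.1 (hzero l).2.1)
  have hrec : ∀ l, 2 * (X l ^ 2 - r ^ 2) = a * (X (prev l) ^ 2 - r ^ 2) := fun l => by
    have h := (hzero l).1
    rw [hYX, div_eq_one_iff_eq (hden l).ne'] at h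
    linear_combination h - hr2
  have hsq : (fun l => X l ^ 2 - r ^ 2) = 0 := by
    refine eq_zero_of_abs_le_mul_abs_comp prev (c := a / 2) (by linarith) fun l => ?_
    have h := congrArg abs (hrec l)
    rw [abs_mul, abs_mul, abs_two, abs_of_nonneg ha] at h
    linarith
  have hXr : X = fun _ => r := funext fun l =>
    (sq_eq_sq₀ (hX l).le hr.le).1 (sub_eq_zero.1 (congrFun hsq l))
  refine ⟨hXr, ?_, funext fun l => by linarith [(hzero l).2.2]⟩
  funext l
  rw [hYX, hXr]

theorem eventually_sum_layerEnergy_lt {n a b r : ℝ} (hn : 0 < n) (ha : 0 ≤ a) (ha2 : a < 2)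
    (hb : 0 < b) (hr : 0 < r) (hr2 : r ^ 2 * (2 - a) = n * b) :
    ∀ᶠ p : (ι → ℝ) × (ι → ℝ) × (ι → ℝ) in 𝓝 (fun _ => r, fun _ => r, fun _ => n / 2),
      p ≠ (fun _ => r, fun _ => r, fun _ => n / 2) →
      ∑ _l : ι, layerEnergy n a b r r r (n / 2) <
        ∑ l, layerEnergy n a b (p.1 (prev l)) (p.1 l) (p.2.1 l) (p.2.2 l) := by
  filter_upwards [eventually_layer_bounds hn hr] with ⟨X, Y, K⟩ hp hne
  set D := fun l => layerDeficit n ((X l ^ 2 + Y l ^ 2) / (a * X (prev l) ^ 2 + n * b))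
    (log (Y l) - log (X l)) (K l - n / 2)
  have hD_nonneg : ∀ l, 0 ≤ D l := fun l =>
    layerDeficit_nonneg _ _ hn (div_pos (by nlinarith [(hp l).1]) (by positivity))
  have hD_pos : 0 < ∑ l, D l := by
    refine lt_of_le_of_ne (Finset.sum_nonneg fun l _ => hD_nonneg l) fun hsum => hne ?_
    have hD l := (Finset.sum_eq_zero_iff_of_nonneg fun l _ => hD_nonneg l).1 hsum.symm l
      (Finset.mem_univ l)
    obtain ⟨rfl, rfl, rfl⟩ := eq_uniform_of_layerDeficit_eq_zero prev hn ha ha2 hb hr hr2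
      (fun l => (hp l).1) (fun l => (hp l).2.1) hD
    rfl
  have hD_le : ∀ l, D l ≤ layerEnergy n a b (X (prev l)) (X l) (Y l) (K l) -
      layerEnergy n a b r r r (n / 2) := fun l =>
    layerDeficit_le_layerEnergy_sub hn ha hb hr hr2 (hp l).1 (hp l).2.1 (hp l).2.2.1.le
      (hp l).2.2.2.le
  have := Finset.sum_le_sum fun l (_ : l ∈ Finset.univ) => hD_le l
  rw [Finset.sum_sub_distrib] at this
  linarith

end Ring

/-- For the rectified linear stochastic network on a ring of depth `L ≥ 3` and
width `N ≥ 2`, with `0 < σ_w² < 2` and `r* = √(N σ_b²/(2 − σ_w²))`, the uniform configuration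
`r₊_l = r₋_l = r*`, `k_l = N/2` is a strict local minimum of the ring energy `ℒ`. -/
theorem relu_ring_uniform_strict_local_min
    (L : ℕ) (hL : 3 ≤ L) (N : ℕ) (hN : 2 ≤ N)
    (σw σb : ℝ) (hσw2 : σw ^ 2 < 2) (hσb : 0 < σb)
    (rs : ℝ) (hrs : rs = Real.sqrt (N * σb ^ 2 / (2 - σw ^ 2)))
    (ℒ : (Fin L → ℝ) × (Fin L → ℝ) × (Fin L → ℝ) → ℝ)
    (hℒ : ∀ p : (Fin L → ℝ) × (Fin L → ℝ) × (Fin L → ℝ),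
      ℒ p = (1 / 2) * ∑ l : Fin L,
        ((p.1 l ^ 2 + p.2.1 l ^ 2) / (σw ^ 2 * p.1 (l - ⟨1, by omega⟩) ^ 2 / N + σb ^ 2) +
          N * Real.log (σw ^ 2 * p.1 l ^ 2 / N + σb ^ 2) +
          (N - p.2.2 l) * (3 * Real.log (N - p.2.2 l) - 2 * Real.log (p.1 l)) +
          p.2.2 l * (3 * Real.log (p.2.2 l) - 2 * Real.log (p.2.1 l)))) :
    ∃ δ > 0, ∀ p : (Fin L → ℝ) × (Fin L → ℝ) × (Fin L → ℝ),
      dist p (fun _ => rs, fun _ => rs, fun _ => (N : ℝ) / 2) < δ →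
      p ≠ (fun _ => rs, fun _ => rs, fun _ => (N : ℝ) / 2) →
      ℒ (fun _ => rs, fun _ => rs, fun _ => (N : ℝ) / 2) < ℒ p := by
  have : NeZero L := ⟨by omega⟩
  set prev := Equiv.subRight (⟨1, by omega⟩ : Fin L)
  have hℒ' p : ℒ p = 1 / 2 * ∑ l, layerEnergy N (σw ^ 2) (σb ^ 2) (p.1 (prev l)) (p.1 l) (p.2.1 l)
      (p.2.2 l) := by
    rw [hℒ, ← sum_ringEnergy_summand_eq_sum_layerEnergy]
    rfl
  have hn : (0 : ℝ) < N := by positivity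
  have hrad : 0 < N * σb ^ 2 / (2 - σw ^ 2) := div_pos (by positivity) (by linarith)
  have hr : 0 < rs := hrs ▸ sqrt_pos.2 hrad
  have hr2 : rs ^ 2 * (2 - σw ^ 2) = N * σb ^ 2 := by
    rw [hrs, sq_sqrt hrad.le, div_mul_cancel₀ _ (by linarith)]
  obtain ⟨δ, hδ, hball⟩ := Metric.eventually_nhds_iff.1 <|
    eventually_sum_layerEnergy_lt prev hn (sq_nonneg σw) hσw2 (by positivity) hr hr2
  refine ⟨δ, hδ, fun p hp hne => ?_⟩
  rw [hℒ', hℒ']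
  exact mul_lt_mul_of_pos_left (hball hp hne) one_half_pos
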